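/- arXiv:2411.00320 — 5 statements merged into one kernel-verified Lean document; each statement's English description precedes it below -/
import Mathlib

section
/- Let N ≥ 3 be an integer and let 0 < R₁ < R₂. Set a := (R₁² − R₂²)/(2N(R₁^{2−N} − R₂^{2−N})) and b := R₁²R₂²(R₁^{−N} − R₂^{−N})/(2N(R₁^{2−N} − R₂^{2−N})), and let U(r) := a·r^{2−N} + b − r²/(2N). Then −U'(R₁) ≠ U'(R₂); that is, the outward normal derivative of the corresponding radial function u(x) = U(|x|) on the inner sphere {|x| = R₁} differs from its outward normal derivative on the outer sphere {|x| = R₂}. -/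
/-!
Write m = N - 2, so that U'(r) = -m a r^(-m-1) - r/N. After clearing denominators, the equation
-U'(R₁) = U'(R₂) becomes m (R₂ - R₁)(R₁^(m+1) + R₂^(m+1)) = 2 R₁ R₂ (R₂^m - R₁^m). The left side is
strictly larger: write R₂^m - R₁^m as R₂ - R₁ times the symmetric geometric sum, and pair its terms
of index i and m - 1 - i; since (R₂^i - R₁^i)(R₂^j - R₁^j) > 0, each pair, after multiplying by
R₁ R₂, is below R₁^(m+1) + R₂^(m+1).
-/

open Finset

section PowerInequalities

variable {R : Type*} [CommRing R] [LinearOrder R] [IsStrictOrderedRing R] {x y : R}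

theorem pow_mul_pow_add_pow_mul_pow_lt (hx : 0 ≤ x) (hxy : x < y) {i j : ℕ} (hi : i ≠ 0)
    (hj : j ≠ 0) : x ^ i * y ^ j + y ^ i * x ^ j < x ^ (i + j) + y ^ (i + j) := by
  linear_combination
    mul_pos (sub_pos.2 (pow_lt_pow_left₀ hxy hx hi)) (sub_pos.2 (pow_lt_pow_left₀ hxy hx hj))

theorem two_mul_mul_mul_pow_sub_pow_lt (hx : 0 ≤ x) (hxy : x < y) {m : ℕ} (hm : m ≠ 0) :
    2 * x * y * (y ^ m - x ^ m) < m * (y - x) * (x ^ (m + 1) + y ^ (m + 1)) := by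
  have hpair : 2 * x * y * ∑ i ∈ range m, y ^ i * x ^ (m - 1 - i)
      = ∑ i ∈ range m, (x ^ (m - i) * y ^ (i + 1) + y ^ (m - i) * x ^ (i + 1)) := by
    rw [two_mul, add_mul, add_mul]
    nth_rw 2 [geom_sum₂_comm]
    rw [mul_sum, mul_sum, ← sum_add_distrib]
    refine sum_congr rfl fun i hi => ?_
    have hsucc : m - 1 - i + 1 = m - i := by have := mem_range.1 hi; omega
    rw [← hsucc]
    ring
  have hterm : ∀ i ∈ range m,
      x ^ (m - i) * y ^ (i + 1) + y ^ (m - i) * x ^ (i + 1) < x ^ (m + 1) + y ^ (m + 1) := by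
    intro i hi
    rw [mem_range] at hi
    rw [show m + 1 = m - i + (i + 1) by omega]
    exact pow_mul_pow_add_pow_mul_pow_lt hx hxy (by omega) i.succ_ne_zero
  calc 2 * x * y * (y ^ m - x ^ m)
      = (y - x) * (2 * x * y * ∑ i ∈ range m, y ^ i * x ^ (m - 1 - i)) := by
        rw [← geom_sum₂_mul]; ring
    _ < (y - x) * ∑ i ∈ range m, (x ^ (m + 1) + y ^ (m + 1)) := by
        rw [hpair]
        exact mul_lt_mul_of_pos_left (sum_lt_sum_of_nonempty (nonempty_range_iff.2 hm) hterm)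
          (sub_pos.2 hxy)
    _ = m * (y - x) * (x ^ (m + 1) + y ^ (m + 1)) := by
        rw [sum_const, card_range, nsmul_eq_mul]; ring

end PowerInequalities

theorem deriv_mul_zpow_add_sub_sq_div (a b c : ℝ) (k : ℤ) {r : ℝ} (hr : r ≠ 0) :
    deriv (fun r : ℝ => a * r ^ k + b - r ^ 2 / c) r = a * (k * r ^ (k - 1)) - 2 * r / c :=
  ((((hasDerivAt_zpow k r (.inl hr)).const_mul a).add_const b).sub
    ((hasDerivAt_pow 2 r).div_const c)).deriv.trans (by push_cast; ring)

theorem annulus_normal_derivatives_differ_dim_ge_three (N : ℕ) (hN : 3 ≤ N)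
    (R₁ R₂ : ℝ) (hR₁ : 0 < R₁) (hR₁₂ : R₁ < R₂) :
    let a : ℝ := (R₁ ^ 2 - R₂ ^ 2) /
      (2 * N * (R₁ ^ (2 - (N : ℤ)) - R₂ ^ (2 - (N : ℤ))))
    let b : ℝ := R₁ ^ 2 * R₂ ^ 2 * (R₁ ^ (-(N : ℤ)) - R₂ ^ (-(N : ℤ))) /
      (2 * N * (R₁ ^ (2 - (N : ℤ)) - R₂ ^ (2 - (N : ℤ))))
    let U : ℝ → ℝ := fun r => a * r ^ (2 - (N : ℤ)) + b - r ^ 2 / (2 * N)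
    (-deriv U R₁) ≠ deriv U R₂ := by
  intro a b U hflux
  have hR₂ : 0 < R₂ := hR₁.trans hR₁₂
  rw [deriv_mul_zpow_add_sub_sq_div _ _ _ _ hR₁.ne',
    deriv_mul_zpow_add_sub_sq_div _ _ _ _ hR₂.ne'] at hflux
  obtain ⟨m, rfl⟩ : ∃ m, N = m + 2 := ⟨N - 2, by omega⟩
  have hk : (2 : ℤ) - ((m + 2 : ℕ) : ℤ) = -(m : ℤ) := by push_cast; ring
  have hk₁ : -(m : ℤ) - 1 = -((m + 1 : ℕ) : ℤ) := by push_cast; ring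
  simp only [a, hk, hk₁, zpow_neg, zpow_natCast] at hflux
  have hpow_ne : R₂ ^ m - R₁ ^ m ≠ 0 :=
    (sub_pos.2 (pow_lt_pow_left₀ hR₁₂ hR₁.le (by omega))).ne'
  field_simp at hflux
  push_cast at hflux
  have hbalance : (R₁ + R₂) * (R₁ ^ m * R₂ ^ m) *
      (m * (R₂ - R₁) * (R₁ ^ (m + 1) + R₂ ^ (m + 1)) - 2 * R₁ * R₂ * (R₂ ^ m - R₁ ^ m)) = 0 := by
    linear_combination -hflux
  have hkey := two_mul_mul_mul_pow_sub_pow_lt hR₁.le hR₁₂ (m := m) (by omega)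
  exact (mul_pos (by positivity) (sub_pos.2 hkey)).ne' hbalance
end

section
/- Let 0 < R₁ < R₂. Set a := (R₁² − R₂²)/(4·log(R₁/R₂)) and b := R₁²/4 − a·log R₁, and let U(r) := a·log r + b − r²/4. Then −U'(R₁) ≠ U'(R₂); that is, the outward normal derivative of the corresponding radial function u(x) = U(|x|) on the inner circle {|x| = R₁} differs from its outward normal derivative on the outer circle {|x| = R₂}. -/
/-!
The radial solution has `U'(r) = a / r - r / 2`, so `-U'(R₁) = U'(R₂)` forces `a = R₁ R₂ / 2`.
But `2a = (R₂² - R₁²) / (log R₂² - log R₁²)` is the logarithmic mean of `R₁²` and `R₂²`, which strictly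
exceeds their geometric mean `R₁ R₂`; in terms of `t = R₂ / R₁` this is `log t < sinh (log t)`.
-/

open Real

lemma log_lt_half_sub_inv {t : ℝ} (ht : 1 < t) : log t < (t - t⁻¹) / 2 :=
  sinh_log (zero_lt_one.trans ht) ▸ self_lt_sinh_iff.2 (log_pos ht)

lemma mul_lt_sq_sub_sq_div_two_mul_log_div {x y : ℝ} (hx : 0 < x) (hxy : x < y) :
    x * y < (y ^ 2 - x ^ 2) / (2 * log (y / x)) := by
  have hy : 0 < y := hx.trans hxy
  have hlog : 0 < log (y / x) := log_pos ((one_lt_div hx).2 hxy)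
  have hkey := log_lt_half_sub_inv ((one_lt_div hx).2 hxy)
  have hsinh : (y / x - (y / x)⁻¹) / 2 = (y ^ 2 - x ^ 2) / (2 * x * y) := by
    field_simp
  rw [hsinh, lt_div_iff₀ (by positivity)] at hkey
  rw [lt_div_iff₀ (by positivity)]
  linarith

lemma hasDerivAt_mul_log_add_sub_sq_div_four (a b : ℝ) {r : ℝ} (hr : r ≠ 0) :
    HasDerivAt (fun r => a * log r + b - r ^ 2 / 4) (a / r - r / 2) r := by
  refine (((hasDerivAt_log hr).const_mul a).add_const b).sub
    ((hasDerivAt_pow 2 r).div_const 4) |>.congr_deriv ?_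
  norm_num
  ring

theorem annulus_normal_derivatives_differ_dim_two (R₁ R₂ : ℝ)
    (hR₁ : 0 < R₁) (hR₁₂ : R₁ < R₂) :
    let a : ℝ := (R₁ ^ 2 - R₂ ^ 2) / (4 * Real.log (R₁ / R₂))
    let b : ℝ := R₁ ^ 2 / 4 - a * Real.log R₁
    let U : ℝ → ℝ := fun r => a * Real.log r + b - r ^ 2 / 4
    (-deriv U R₁) ≠ deriv U R₂ := by
  intro a b U
  have hR₂ : 0 < R₂ := hR₁.trans hR₁₂
  have hU (r : ℝ) (hr : 0 < r) : deriv U r = a / r - r / 2 :=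
    (hasDerivAt_mul_log_add_sub_sq_div_four a b hr.ne').deriv
  have ha : R₁ * R₂ / 2 < a := by
    have hmean := mul_lt_sq_sub_sq_div_two_mul_log_div hR₁ hR₁₂
    have ha' : a = (R₂ ^ 2 - R₁ ^ 2) / (2 * log (R₂ / R₁)) / 2 := by
      rw [show a = (R₁ ^ 2 - R₂ ^ 2) / (4 * log (R₁ / R₂)) from rfl,
        ← inv_div R₂ R₁, log_inv, mul_neg, div_neg, ← neg_div]
      ring
    linarith
  rw [hU R₁ hR₁, hU R₂ hR₂]
  intro h
  have h' : a * (R₁ + R₂) = R₁ * R₂ / 2 * (R₁ + R₂) := by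
    field_simp at h
    linarith
  exact ha.ne' (mul_right_cancel₀ (by positivity) h')
end

section
/- Let N ≥ 2 be an integer and let 0 < R₁ < R₂. There is no function U, continuous on [R₁,R₂], continuously differentiable near R₁ and R₂ in [R₁,R₂], and twice differentiable on (R₁,R₂), such that U''(r) + ((N−1)/r)·U'(r) = −1 on (R₁,R₂), U(R₁) = U(R₂) = 0, and −U'(R₁) = U'(R₂). Equivalently, for every such U solving the boundary value problem one has U'(R₁) + U'(R₂) ≠ 0. -/
/-!
Multiplying the equation by `r^(N-1)` shows that `r^(N-1) U' + r^N / N` is constant, so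
`U' = C r^(1-N) - r / N`. If `U'(R₁) + U'(R₂) = 0`, then `C > 0` (otherwise `U' < 0`), hence `U'`
is strictly convex and the trapezoidal rule is a strict overestimate:
`0 = U(R₂) - U(R₁) = ∫ U' < (R₂ - R₁) (U'(R₁) + U'(R₂)) / 2 = 0`.
-/

open Set Metric Filter Topology

theorem StrictConvexOn.lt_chord {f : ℝ → ℝ} {a b x : ℝ} (hf : StrictConvexOn ℝ (Icc a b) f)
    (hx : x ∈ Ioo a b) : f x < f a + (f b - f a) / (b - a) * (x - a) := by
  have hba : 0 < b - a := by linarith [hx.1, hx.2]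
  have hconv := hf.2 (left_mem_Icc.2 (by linarith)) (right_mem_Icc.2 (by linarith))
    (by linarith) (div_pos (sub_pos.2 hx.2) hba) (div_pos (sub_pos.2 hx.1) hba)
    (by field_simp; ring)
  have hcomb : ((b - x) / (b - a)) • a + ((x - a) / (b - a)) • b = x := by
    simp only [smul_eq_mul]; field_simp; ring
  rw [hcomb] at hconv
  calc f x < ((b - x) / (b - a)) • f a + ((x - a) / (b - a)) • f b := hconv
    _ = _ := by simp only [smul_eq_mul]; field_simp; ring

theorem StrictConvexOn.integral_lt_trapezoid {f : ℝ → ℝ} {a b : ℝ} (hab : a < b)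
    (hf : StrictConvexOn ℝ (Icc a b) f) (hfc : ContinuousOn f (Icc a b)) :
    ∫ x in a..b, f x < (b - a) * (f a + f b) / 2 := by
  have hba : b - a ≠ 0 := sub_ne_zero.2 hab.ne'
  set chord : ℝ → ℝ := fun x => f a + (f b - f a) / (b - a) * (x - a)
  have hchord : ∫ x in a..b, chord x = (b - a) * (f a + f b) / 2 := by
    rw [intervalIntegral.integral_add (by simp) (by simp)]
    simp only [intervalIntegral.integral_const, smul_eq_mul, intervalIntegral.integral_const_mul,
      intervalIntegral.intervalIntegrable_id, intervalIntegrable_const,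
      intervalIntegral.integral_sub, integral_id]
    field_simp
    ring
  rw [← hchord]
  refine intervalIntegral.integral_lt_integral_of_continuousOn_of_le_of_exists_lt hab hfc
    (by fun_prop) (fun x hx => ?_) ⟨(a + b) / 2, ⟨by linarith, by linarith⟩,
      hf.lt_chord ⟨by linarith, by linarith⟩⟩
  rcases hx.2.lt_or_eq with hxb | hxb
  · exact (hf.lt_chord ⟨hx.1, hxb⟩).le
  · simp only [hxb, chord, div_mul_cancel₀ _ hba, add_sub_cancel, le_refl]

theorem hasDerivWithinAt_Icc_of_hasDerivAt_Ioo {E : Type*} [NormedAddCommGroup E]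
    [NormedSpace ℝ E] {f f' : ℝ → E} {a b x : ℝ} (hab : a < b)
    (hf : ContinuousOn f (Icc a b)) (hf' : ContinuousOn f' (Icc a b))
    (hderiv : ∀ y ∈ Ioo a b, HasDerivAt f (f' y) y) (hx : x ∈ Icc a b) :
    HasDerivWithinAt f (f' x) (Icc a b) x := by
  have hdiff : DifferentiableOn ℝ f (Ioo a b) := fun y hy =>
    (hderiv y hy).differentiableAt.differentiableWithinAt
  have hlim : Tendsto (deriv f) (𝓝[Ioo a b] x) (𝓝 (f' x)) :=
    ((hf' x hx).mono Ioo_subset_Icc_self).congr' <|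
      eventually_nhdsWithin_of_forall fun y hy => (hderiv y hy).deriv.symm
  rcases hx.1.eq_or_lt with rfl | hax
  · refine (hasDerivWithinAt_Ici_of_tendsto_deriv hdiff ((hf _ hx).mono Ioo_subset_Icc_self)
      (Ioo_mem_nhdsGT hab) ?_).mono Icc_subset_Ici_self
    rwa [← nhdsWithin_Ioo_eq_nhdsGT hab]
  rcases hx.2.eq_or_lt with rfl | hxb
  · refine (hasDerivWithinAt_Iic_of_tendsto_deriv hdiff ((hf _ hx).mono Ioo_subset_Icc_self)
      (Ioo_mem_nhdsLT hab) ?_).mono Icc_subset_Iic_self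
    rwa [← nhdsWithin_Ioo_eq_nhdsLT hab]
  exact (hderiv x ⟨hax, hxb⟩).hasDerivWithinAt

noncomputable def radialTorsionSlope (N : ℕ) (C r : ℝ) : ℝ := C * r ^ (1 - (N : ℤ)) - r / N

theorem hasDerivAt_radialTorsionFlux {N : ℕ} (hN : N ≠ 0) {U : ℝ → ℝ} {r : ℝ} (hr : 0 < r)
    (hU : DifferentiableAt ℝ (deriv U) r)
    (hode : deriv (deriv U) r + ((N - 1) / r) * deriv U r = -1) :
    HasDerivAt (fun x => x ^ ((N : ℤ) - 1) * deriv U x + x ^ N / N) 0 r := by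
  have hflux := ((hasDerivAt_zpow ((N : ℤ) - 1) r (Or.inl hr.ne')).mul hU.hasDerivAt).add
    ((hasDerivAt_pow N r).div_const (N : ℝ))
  refine hflux.congr_deriv ?_
  obtain ⟨k, rfl⟩ := Nat.exists_eq_add_one_of_ne_zero hN
  rw [zpow_sub_one₀ hr.ne', zpow_sub_one₀ hr.ne', zpow_natCast]
  push_cast at hode ⊢
  field_simp at hode ⊢
  linear_combination r ^ (k + 1) * hode

theorem exists_deriv_eq_radialTorsionSlope {N : ℕ} (hN : N ≠ 0) {a b : ℝ} (ha : 0 < a)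
    {U : ℝ → ℝ} (hd : ∀ r ∈ Ioo a b, DifferentiableAt ℝ (deriv U) r)
    (hode : ∀ r ∈ Ioo a b, deriv (deriv U) r + ((N - 1) / r) * deriv U r = -1) :
    ∃ C, ∀ r ∈ Ioo a b, deriv U r = radialTorsionSlope N C r := by
  have hflux (r) (hr : r ∈ Ioo a b) :=
    hasDerivAt_radialTorsionFlux hN (ha.trans hr.1) (hd r hr) (hode r hr)
  obtain ⟨C, hC⟩ := isOpen_Ioo.exists_is_const_of_deriv_eq_zero isPreconnected_Ioo
    (fun r hr => (hflux r hr).differentiableAt.differentiableWithinAt)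
    (fun r hr => (hflux r hr).deriv)
  refine ⟨C, fun r hr => ?_⟩
  have hflux_eq := hC r hr
  replace hr : 0 < r := ha.trans hr.1
  have hN' : (N : ℝ) ≠ 0 := Nat.cast_ne_zero.2 hN
  simp only [radialTorsionSlope, zpow_sub₀ hr.ne', zpow_natCast, zpow_one] at hflux_eq ⊢
  field_simp at hflux_eq ⊢
  linear_combination hflux_eq

theorem radialTorsionSlope_neg {N : ℕ} {C r : ℝ} (hN : N ≠ 0) (hC : C ≤ 0) (hr : 0 < r) :
    radialTorsionSlope N C r < 0 := by
  have hlin : 0 < r / N := div_pos hr (by positivity)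
  have hpow : C * r ^ (1 - (N : ℤ)) ≤ 0 := mul_nonpos_of_nonpos_of_nonneg hC (by positivity)
  simp only [radialTorsionSlope]
  linarith

theorem continuousOn_radialTorsionSlope (N : ℕ) (C : ℝ) :
    ContinuousOn (radialTorsionSlope N C) (Ioi 0) := by
  unfold radialTorsionSlope
  exact (((continuousOn_zpow₀ _).mono fun r hr => ne_of_gt hr).const_smul C).sub
    (continuousOn_id.div_const _)

theorem strictConvexOn_radialTorsionSlope {N : ℕ} (hN : 2 ≤ N) {C : ℝ} (hC : 0 < C) :
    StrictConvexOn ℝ (Ioi 0) (radialTorsionSlope N C) := by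
  have hpow : StrictConvexOn ℝ (Ioi 0) fun r : ℝ => r ^ (1 - (N : ℤ)) :=
    strictConvexOn_zpow (by omega) (by omega)
  refine ⟨convex_Ioi 0, fun x hx y hy hxy a b ha hb hab => ?_⟩
  have := mul_lt_mul_of_pos_left (hpow.2 hx hy hxy ha hb hab) hC
  simp only [radialTorsionSlope, smul_eq_mul] at this ⊢
  linear_combination this

theorem annulus_no_overdetermined_solution_general (N : ℕ) (hN : 2 ≤ N)
    (R₁ R₂ : ℝ) (hR₁ : 0 < R₁) (hR₁₂ : R₁ < R₂) (U : ℝ → ℝ)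
    (hc : ContinuousOn U (Icc R₁ R₂))
    (hd : ∀ r ∈ Ioo R₁ R₂, DifferentiableAt ℝ U r ∧ DifferentiableAt ℝ (deriv U) r)
    (hode : ∀ r ∈ Ioo R₁ R₂,
      deriv (deriv U) r + (((N : ℝ) - 1) / r) * deriv U r = -1)
    (hb₁ : U R₁ = 0) (hb₂ : U R₂ = 0) :
    derivWithin U (Icc R₁ R₂) R₁ + derivWithin U (Icc R₁ R₂) R₂ ≠ 0 := by
  have hN₀ : N ≠ 0 := by omega
  obtain ⟨C, hU'⟩ := exists_deriv_eq_radialTorsionSlope hN₀ hR₁ (fun r hr => (hd r hr).2) hode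
  have hpos : Icc R₁ R₂ ⊆ Ioi 0 := fun r hr => hR₁.trans_le hr.1
  have hFc := (continuousOn_radialTorsionSlope N C).mono hpos
  have hderiv (r) (hr : r ∈ Ioo R₁ R₂) : HasDerivAt U (radialTorsionSlope N C r) r :=
    hU' r hr ▸ (hd r hr).1.hasDerivAt
  have hendpoint (r) (hr : r ∈ Icc R₁ R₂) :
      derivWithin U (Icc R₁ R₂) r = radialTorsionSlope N C r :=
    (hasDerivWithinAt_Icc_of_hasDerivAt_Ioo hR₁₂ hc hFc hderiv hr).derivWithin
      (uniqueDiffOn_Icc hR₁₂ r hr)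
  have hintegral : ∫ r in R₁..R₂, radialTorsionSlope N C r = 0 := by
    rw [intervalIntegral.integral_eq_sub_of_hasDerivAt_of_le hR₁₂.le hc hderiv
      (hFc.intervalIntegrable_of_Icc hR₁₂.le), hb₁, hb₂, sub_zero]
  rw [hendpoint R₁ (left_mem_Icc.2 hR₁₂.le), hendpoint R₂ (right_mem_Icc.2 hR₁₂.le)]
  intro hsum
  have hC : 0 < C := by
    by_contra! hC
    linarith [radialTorsionSlope_neg hN₀ hC hR₁, radialTorsionSlope_neg hN₀ hC (hR₁.trans hR₁₂)]
  have htrapezoid := ((strictConvexOn_radialTorsionSlope hN hC).subset hpos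
    (convex_Icc R₁ R₂)).integral_lt_trapezoid hR₁₂ hFc
  rw [hintegral, hsum, mul_zero, zero_div] at htrapezoid
  exact htrapezoid.false

theorem annulus_no_overdetermined_solution (N : ℕ) (hN : 2 ≤ N)
    (R₁ R₂ : ℝ) (hR₁ : 0 < R₁) (hR₁₂ : R₁ < R₂) (U : ℝ → ℝ)
    (hc : ContinuousOn U (Icc R₁ R₂))
    (hC1 : ∃ ε > 0, ContDiffOn ℝ 1 U (Icc R₁ R₂ ∩ ball R₁ ε) ∧
      ContDiffOn ℝ 1 U (Icc R₁ R₂ ∩ ball R₂ ε))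
    (hd : ∀ r ∈ Ioo R₁ R₂, DifferentiableAt ℝ U r ∧ DifferentiableAt ℝ (deriv U) r)
    (hode : ∀ r ∈ Ioo R₁ R₂,
      deriv (deriv U) r + (((N : ℝ) - 1) / r) * deriv U r = -1)
    (hb₁ : U R₁ = 0) (hb₂ : U R₂ = 0) :
    derivWithin U (Icc R₁ R₂) R₁ + derivWithin U (Icc R₁ R₂) R₂ ≠ 0 :=
  annulus_no_overdetermined_solution_general N hN R₁ R₂ hR₁ hR₁₂ U hc hd hode hb₁ hb₂
end

section
/- For every integer N ≥ 3 and all real numbers s, t with 0 < s < t, the strict inequality (N−2)·(t−s)·(s^{1−N} + t^{1−N}) > 2·(s^{2−N} − t^{2−N}) holds. -/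
/-!
Put `m = N - 2` and clear denominators: the claim becomes
`2st(t^m - s^m) < m(t - s)(s^(m+1) + t^(m+1))`. Factoring `t^m - s^m` as a geometric sum, this is
`2 ∑_{i<m} t^(i+1) s^(m-i) < m (s^(m+1) + t^(m+1))`, and pairing the `i`-th summand with the
`(m-1-i)`-th reduces it to `t^a s^b + t^b s^a < s^(a+b) + t^(a+b)` for `a, b ≥ 1`, which is
`(t^a - s^a)(t^b - s^b) > 0`.
-/

open Finset

section

variable {s t : ℝ}

theorem pow_mul_pow_add_pow_mul_pow_lt_s8 (hs : 0 ≤ s) (hst : s < t) {a b : ℕ} (ha : a ≠ 0)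
    (hb : b ≠ 0) : t ^ a * s ^ b + t ^ b * s ^ a < s ^ (a + b) + t ^ (a + b) := by
  have hprod : 0 < (t ^ a - s ^ a) * (t ^ b - s ^ b) :=
    mul_pos (sub_pos.2 (pow_lt_pow_left₀ hst hs ha)) (sub_pos.2 (pow_lt_pow_left₀ hst hs hb))
  linarith [show (t ^ a - s ^ a) * (t ^ b - s ^ b) =
    s ^ (a + b) + t ^ (a + b) - (t ^ a * s ^ b + t ^ b * s ^ a) by ring]

theorem two_mul_sum_pow_mul_pow_lt (hs : 0 ≤ s) (hst : s < t) {m : ℕ} (hm : m ≠ 0) :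
    2 * ∑ i ∈ range m, t ^ (i + 1) * s ^ (m - i) < m * (s ^ (m + 1) + t ^ (m + 1)) := by
  set f : ℕ → ℝ := fun i ↦ t ^ (i + 1) * s ^ (m - i)
  calc 2 * ∑ i ∈ range m, f i = ∑ i ∈ range m, (f i + f (m - 1 - i)) := by
        rw [sum_add_distrib, sum_range_reflect]; ring
    _ < ∑ _i ∈ range m, (s ^ (m + 1) + t ^ (m + 1)) := by
        refine sum_lt_sum_of_nonempty (nonempty_range_iff.2 hm) fun i hi ↦ ?_
        have him : i < m := mem_range.1 hi
        have hreflect : f (m - 1 - i) = t ^ (m - i) * s ^ (i + 1) := by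
          simp only [f, show m - 1 - i + 1 = m - i by omega, show m - (m - 1 - i) = i + 1 by omega]
        have hpair := pow_mul_pow_add_pow_mul_pow_lt_s8 hs hst (a := i + 1) (b := m - i) (by omega)
          (by omega)
        rw [hreflect]
        rwa [show i + 1 + (m - i) = m + 1 by omega] at hpair
    _ = m * (s ^ (m + 1) + t ^ (m + 1)) := by simp [mul_add]

theorem two_mul_mul_sub_pow_lt (hs : 0 ≤ s) (hst : s < t) {m : ℕ} (hm : m ≠ 0) :
    2 * s * t * (t ^ m - s ^ m) < m * (t - s) * (s ^ (m + 1) + t ^ (m + 1)) := by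
  have hgeom : s * t * (t ^ m - s ^ m) = (t - s) * ∑ i ∈ range m, t ^ (i + 1) * s ^ (m - i) := by
    rw [← geom_sum₂_mul, mul_comm (t - s), ← mul_assoc, mul_sum]
    congr 1
    refine sum_congr rfl fun i hi ↦ ?_
    rw [show m - i = m - 1 - i + 1 by have := mem_range.1 hi; omega]
    ring
  calc 2 * s * t * (t ^ m - s ^ m)
      = (t - s) * (2 * ∑ i ∈ range m, t ^ (i + 1) * s ^ (m - i)) := by
        linear_combination 2 * hgeom
    _ < (t - s) * (m * (s ^ (m + 1) + t ^ (m + 1))) :=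
        mul_lt_mul_of_pos_left (two_mul_sum_pow_mul_pow_lt hs hst hm) (sub_pos.2 hst)
    _ = m * (t - s) * (s ^ (m + 1) + t ^ (m + 1)) := by ring

end

theorem key_inequality_dim_ge_three (N : ℕ) (hN : 3 ≤ N) (s t : ℝ)
    (hs : 0 < s) (hst : s < t) :
    2 * (s ^ (2 - (N : ℤ)) - t ^ (2 - (N : ℤ))) <
      ((N : ℝ) - 2) * (t - s) * (s ^ (1 - (N : ℤ)) + t ^ (1 - (N : ℤ))) := by
  obtain ⟨m, rfl⟩ : ∃ m, N = m + 2 := ⟨N - 2, by omega⟩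
  have ht : 0 < t := hs.trans hst
  have h2 : 2 - ((m + 2 : ℕ) : ℤ) = -(m : ℤ) := by push_cast; ring
  have h1 : 1 - ((m + 2 : ℕ) : ℤ) = -((m + 1 : ℕ) : ℤ) := by push_cast; ring
  rw [h1, h2, zpow_neg, zpow_neg, zpow_neg, zpow_neg, zpow_natCast, zpow_natCast, zpow_natCast,
    zpow_natCast, Nat.cast_add, Nat.cast_two, add_sub_cancel_right]
  have hden : 0 < s ^ (m + 1) * t ^ (m + 1) := by positivity
  have hlhs : 2 * ((s ^ m)⁻¹ - (t ^ m)⁻¹) * (s ^ (m + 1) * t ^ (m + 1)) =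
      2 * s * t * (t ^ m - s ^ m) := by
    field_simp
    ring
  have hrhs : m * (t - s) * ((s ^ (m + 1))⁻¹ + (t ^ (m + 1))⁻¹) * (s ^ (m + 1) * t ^ (m + 1)) =
      m * (t - s) * (s ^ (m + 1) + t ^ (m + 1)) := by
    field_simp
    ring
  rw [← mul_lt_mul_iff_of_pos_right hden, hlhs, hrhs]
  exact two_mul_mul_sub_pow_lt hs.le hst (by omega)
end

section
/- Let N ≥ 2 be an integer, ε > 0 and c ∈ ℝ. Write points of ℝ^N as (ξ, η) with ξ ∈ ℝ^{N−1} and η ∈ ℝ. Let f : ℝ^{N−1} → ℝ be C² on {|ξ| < ε} with f(0) = 0 and ∇f(0) = 0, and let u : ℝ^{N−1} × ℝ → ℝ be C² on a neighborhood of P := (0, 0). Assume that for all |ξ| < ε: (a) u(ξ, f(ξ)) = 0, and (b) −∇_ξ u(ξ, f(ξ))·∇f(ξ) + ∂_η u(ξ, f(ξ)) = c·√(1 + |∇f(ξ)|²). Then ∂²u/∂ξ_i∂η (P) = 0 for every i = 1, …, N−1. -/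
/-! Differentiate both boundary conditions along the graph map `ξ ↦ (ξ, f ξ)`, whose derivative
at the base point is `v ↦ (v, 0)` because `∇f` vanishes there. The Dirichlet condition then kills
the horizontal derivatives of `u` at `P`, and the derivative of `ξ ↦ ∂_η u (ξ, f ξ)` is the
mixed derivative `∂_ξ ∂_η u (P)`. By the Neumann condition that function equals
`c √(1 + |∇f|²) + ∇_ξ u (ξ, f ξ) · ∇f ξ`: the first term is stationary since `∇f = 0` at the base
point, and by the product rule the second has derivative `v ↦ ∇_ξ u (P) · (D∇f v)`, which vanishes
by the Dirichlet condition. -/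

open Metric Filter Topology

section Graph

variable {𝕜 E F G : Type*} [NontriviallyNormedField 𝕜]
  [NormedAddCommGroup E] [NormedSpace 𝕜 E] [NormedAddCommGroup F] [NormedSpace 𝕜 F]
  [NormedAddCommGroup G] [NormedSpace 𝕜 G]

theorem HasFDerivAt.comp_graph_of_hasFDerivAt_zero {g : E × F → G} {g' : E × F →L[𝕜] G}
    {f : E → F} {x : E} (hg : HasFDerivAt g g' (x, f x)) (hf : HasFDerivAt f (0 : E →L[𝕜] F) x) :
    HasFDerivAt (fun ξ => g (ξ, f ξ)) (g'.comp (ContinuousLinearMap.inl 𝕜 E F)) x :=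
  hg.comp x ((hasFDerivAt_id x).prodMk hf)

theorem fderiv_comp_inl_eq_zero_of_eventually_graph_eq_zero {u : E × F → G} {f : E → F}
    {x : E} (hu : DifferentiableAt 𝕜 u (x, f x)) (hf : HasFDerivAt f (0 : E →L[𝕜] F) x)
    (hbd : ∀ᶠ ξ in 𝓝 x, u (ξ, f ξ) = 0) :
    (fderiv 𝕜 u (x, f x)).comp (ContinuousLinearMap.inl 𝕜 E F) = 0 :=
  (hu.hasFDerivAt.comp_graph_of_hasFDerivAt_zero hf).unique
    ((hasFDerivAt_const 0 x).congr_of_eventuallyEq hbd)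

theorem HasFDerivAt.clm_apply_of_eq_zero {M : Type*} [NormedAddCommGroup M] [NormedSpace 𝕜 M]
    {L : E → M →L[𝕜] G} {L' : E →L[𝕜] M →L[𝕜] G} {w : E → M} {w' : E →L[𝕜] M} {x : E}
    (hL : HasFDerivAt L L' x) (hw : HasFDerivAt w w' x) (hw0 : w x = 0) :
    HasFDerivAt (fun ξ => L ξ (w ξ)) ((L x).comp w') x := by
  simpa [hw0] using hL.clm_apply hw

end Graph

section Inner

variable {E H : Type*} [NormedAddCommGroup E] [NormedSpace ℝ E]
  [NormedAddCommGroup H] [InnerProductSpace ℝ H]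

theorem HasFDerivAt.sqrt_one_add_norm_sq_of_eq_zero {h : E → H} {h' : E →L[ℝ] H} {x : E}
    (hh : HasFDerivAt h h' x) (hx : h x = 0) (c : ℝ) :
    HasFDerivAt (fun ξ => c * √(1 + ‖h ξ‖ ^ 2)) (0 : E →L[ℝ] ℝ) x := by
  have hsq : HasFDerivAt (fun ξ => 1 + ‖h ξ‖ ^ 2) (0 : E →L[ℝ] ℝ) x := by
    simpa [hx] using (hh.norm_sq).const_add 1
  simpa using ((hsq.sqrt (by simp [hx])).const_mul c)

theorem DifferentiableAt.gradient [CompleteSpace H] {f : H → ℝ} {x : H}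
    (hf : DifferentiableAt ℝ (fderiv ℝ f) x) : DifferentiableAt ℝ (gradient f) x :=
  (InnerProductSpace.toDual ℝ H).symm.differentiable.differentiableAt.comp x hf

end Inner

theorem fderiv_normalDeriv_comp_inl_eq_zero {E : Type*} [NormedAddCommGroup E]
    [InnerProductSpace ℝ E] [CompleteSpace E] {f : E → ℝ} {u : E × ℝ → ℝ} {x : E} {c : ℝ}
    (hf : ContDiffAt ℝ 2 f x) (hdf : fderiv ℝ f x = 0) (hu : ContDiffAt ℝ 2 u (x, f x))
    (hbd : ∀ᶠ ξ in 𝓝 x, u (ξ, f ξ) = 0)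
    (hneu : ∀ᶠ ξ in 𝓝 x, -(fderiv ℝ u (ξ, f ξ) (gradient f ξ, 0)) +
      fderiv ℝ u (ξ, f ξ) (0, 1) = c * √(1 + ‖gradient f ξ‖ ^ 2)) :
    (fderiv ℝ (fun p => fderiv ℝ u p (0, 1)) (x, f x)).comp (ContinuousLinearMap.inl ℝ E ℝ) =
      0 := by
  have hf' : HasFDerivAt f (0 : E →L[ℝ] ℝ) x :=
    hdf ▸ (hf.differentiableAt two_ne_zero).hasFDerivAt
  have hDu : DifferentiableAt ℝ (fderiv ℝ u) (x, f x) :=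
    (hu.fderiv_right one_add_one_eq_two.le).differentiableAt one_ne_zero
  have hgrad : HasFDerivAt (gradient f) (fderiv ℝ (gradient f) x) x :=
    ((hf.fderiv_right one_add_one_eq_two.le).differentiableAt one_ne_zero).gradient.hasFDerivAt
  have hgrad0 : gradient f x = 0 := by simp [gradient, hdf]
  have hdir : (fderiv ℝ u (x, f x)).comp (ContinuousLinearMap.inl ℝ E ℝ) = 0 :=
    fderiv_comp_inl_eq_zero_of_eventually_graph_eq_zero (hu.differentiableAt two_ne_zero) hf' hbd
  have htangential : HasFDerivAt (fun ξ => fderiv ℝ u (ξ, f ξ) (gradient f ξ, 0))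
      (0 : E →L[ℝ] ℝ) x := by
    have h := (hDu.hasFDerivAt.comp_graph_of_hasFDerivAt_zero (g := fderiv ℝ u)
      hf').clm_apply_of_eq_zero ((ContinuousLinearMap.inl ℝ E ℝ).hasFDerivAt.comp x hgrad)
      (by simp [hgrad0])
    rwa [← ContinuousLinearMap.comp_assoc, hdir, ContinuousLinearMap.zero_comp] at h
  have hnormal : HasFDerivAt (fun ξ => fderiv ℝ u (ξ, f ξ) (0, 1)) (0 : E →L[ℝ] ℝ) x := by
    refine (zero_add (0 : E →L[ℝ] ℝ) ▸
      (hgrad.sqrt_one_add_norm_sq_of_eq_zero hgrad0 c).add htangential).congr_of_eventuallyEq ?_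
    filter_upwards [hneu] with ξ hξ
    simp only [Pi.add_apply]
    linarith
  exact ((hDu.clm_apply (differentiableAt_const _)).hasFDerivAt.comp_graph_of_hasFDerivAt_zero
    hf').unique hnormal

theorem neumann_condition_kills_mixed_derivatives_general (N : ℕ)
    (ε : ℝ) (hε : 0 < ε) (c : ℝ)
    (f : EuclideanSpace ℝ (Fin (N - 1)) → ℝ)
    (hf : ContDiffOn ℝ 2 f (ball 0 ε))
    (hf0 : f 0 = 0) (hdf0 : fderiv ℝ f 0 = 0)
    (u : EuclideanSpace ℝ (Fin (N - 1)) × ℝ → ℝ)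
    (hu : ContDiffAt ℝ 2 u ((0 : EuclideanSpace ℝ (Fin (N - 1))), (0 : ℝ)))
    (hbd : ∀ ξ : EuclideanSpace ℝ (Fin (N - 1)), ‖ξ‖ < ε → u (ξ, f ξ) = 0)
    (hneu : ∀ ξ : EuclideanSpace ℝ (Fin (N - 1)), ‖ξ‖ < ε →
      -(fderiv ℝ u (ξ, f ξ) (gradient f ξ, (0 : ℝ))) +
          fderiv ℝ u (ξ, f ξ) ((0 : EuclideanSpace ℝ (Fin (N - 1))), (1 : ℝ)) =
        c * Real.sqrt (1 + ‖gradient f ξ‖ ^ 2)) :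
    ∀ i : Fin (N - 1),
      fderiv ℝ (fun p => fderiv ℝ u p ((0 : EuclideanSpace ℝ (Fin (N - 1))), (1 : ℝ)))
        ((0 : EuclideanSpace ℝ (Fin (N - 1))), (0 : ℝ))
        (EuclideanSpace.single i 1, (0 : ℝ)) = 0 := by
  intro i
  have hball := ball_mem_nhds (0 : EuclideanSpace ℝ (Fin (N - 1))) hε
  have h := fderiv_normalDeriv_comp_inl_eq_zero (hf.contDiffAt hball) hdf0 (hf0 ▸ hu)
    (eventually_of_mem hball fun ξ hξ => hbd ξ (mem_ball_zero_iff.mp hξ))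
    (eventually_of_mem hball fun ξ hξ => hneu ξ (mem_ball_zero_iff.mp hξ))
  rw [hf0] at h
  exact DFunLike.congr_fun h (EuclideanSpace.single i 1)

theorem neumann_condition_kills_mixed_derivatives (N : ℕ) (hN : 2 ≤ N)
    (ε : ℝ) (hε : 0 < ε) (c : ℝ)
    (f : EuclideanSpace ℝ (Fin (N - 1)) → ℝ)
    (hf : ContDiffOn ℝ 2 f (ball 0 ε))
    (hf0 : f 0 = 0) (hdf0 : fderiv ℝ f 0 = 0)
    (u : EuclideanSpace ℝ (Fin (N - 1)) × ℝ → ℝ)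
    (hu : ContDiffAt ℝ 2 u ((0 : EuclideanSpace ℝ (Fin (N - 1))), (0 : ℝ)))
    (hbd : ∀ ξ : EuclideanSpace ℝ (Fin (N - 1)), ‖ξ‖ < ε → u (ξ, f ξ) = 0)
    (hneu : ∀ ξ : EuclideanSpace ℝ (Fin (N - 1)), ‖ξ‖ < ε →
      -(fderiv ℝ u (ξ, f ξ) (gradient f ξ, (0 : ℝ))) +
          fderiv ℝ u (ξ, f ξ) ((0 : EuclideanSpace ℝ (Fin (N - 1))), (1 : ℝ)) =
        c * Real.sqrt (1 + ‖gradient f ξ‖ ^ 2)) :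
    ∀ i : Fin (N - 1),
      fderiv ℝ (fun p => fderiv ℝ u p ((0 : EuclideanSpace ℝ (Fin (N - 1))), (1 : ℝ)))
        ((0 : EuclideanSpace ℝ (Fin (N - 1))), (0 : ℝ))
        (EuclideanSpace.single i 1, (0 : ℝ)) = 0 :=
  neumann_condition_kills_mixed_derivatives_general N ε hε c f hf hf0 hdf0 u hu hbd hneu
end
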